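/- (Product rule) Let F, G ∈ R = 𝔽[x₁,…,xₙ; σ, δ] and a ∈ 𝔽ⁿ. If G(a) = 0, then (FG)(a) = 0. If c = G(a) ≠ 0, then (FG)(a) = F(a^c)·G(a). -/

import Mathlib

/- Common setup: free multivariate skew polynomial rings over a division ring. -/

open Matrix Finsupp

/-- The underlying left `𝔽`-module of the free multivariate skew polynomial ring:
the free left `𝔽`-module with basis the free monoid on `n` symbols. -/
abbrev SkewPoly (𝔽 : Type*) [DivisionRing 𝔽] (n : ℕ) : Type _ := FreeMonoid (Fin n) →₀ 𝔽

namespace SkewPoly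

variable {𝔽 : Type*} [DivisionRing 𝔽] {n : ℕ}

/-- The variable `xᵢ` as a skew polynomial. -/
noncomputable def X (𝔽 : Type*) [DivisionRing 𝔽] {n : ℕ} (i : Fin n) : SkewPoly 𝔽 n :=
  Finsupp.single (FreeMonoid.of i) 1

/-- The constant `a` as a skew polynomial (coefficient on the empty word). -/
noncomputable def C {𝔽 : Type*} [DivisionRing 𝔽] (n : ℕ) (a : 𝔽) :
    SkewPoly 𝔽 n := Finsupp.single 1 a

/-- The degree of a skew polynomial: the maximal length of a word in its support
(`⊥` for the zero polynomial). -/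
noncomputable def deg (F : SkewPoly 𝔽 n) : WithBot ℕ :=
  F.support.sup fun m => ((FreeMonoid.length m : ℕ) : WithBot ℕ)

/-- A matrix morphism `σ : 𝔽 → Mₙ(𝔽)`: a unital ring homomorphism. -/
def IsMatrixMorphism (σ : 𝔽 → Matrix (Fin n) (Fin n) 𝔽) : Prop :=
  σ 1 = 1 ∧ (∀ a b : 𝔽, σ (a + b) = σ a + σ b) ∧ (∀ a b : 𝔽, σ (a * b) = σ a * σ b)

/-- A `σ`-vector derivation `δ : 𝔽 → 𝔽ⁿ`: additive with `δ(ab) = σ(a)δ(b) + δ(a)b`. -/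
def IsVectorDerivation (σ : 𝔽 → Matrix (Fin n) (Fin n) 𝔽) (δ : 𝔽 → Fin n → 𝔽) : Prop :=
  (∀ a b : 𝔽, δ (a + b) = δ a + δ b) ∧
    (∀ a b : 𝔽, δ (a * b) = σ a *ᵥ δ b + fun i => δ a i * b)

/-- A multiplication on the free module `SkewPoly 𝔽 n` making it a ring (with the
existing addition) whose identity is the empty word, which restricts to concatenation
on monomials, is additive on degrees of nonzero elements, and for which left
multiplication by constants is scalar multiplication. -/
structure RawMul (𝔽 : Type*) [DivisionRing 𝔽] (n : ℕ) where
  /-- the multiplication -/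
  mul : SkewPoly 𝔽 n → SkewPoly 𝔽 n → SkewPoly 𝔽 n
  mul_add : ∀ F G H : SkewPoly 𝔽 n, mul F (G + H) = mul F G + mul F H
  add_mul : ∀ F G H : SkewPoly 𝔽 n, mul (F + G) H = mul F H + mul G H
  mul_assoc : ∀ F G H : SkewPoly 𝔽 n, mul (mul F G) H = mul F (mul G H)
  one_mul : ∀ F : SkewPoly 𝔽 n, mul (C n 1) F = F
  mul_one : ∀ F : SkewPoly 𝔽 n, mul F (C n 1) = F
  mono_mul_mono : ∀ m m' : FreeMonoid (Fin n),
    mul (Finsupp.single m 1) (Finsupp.single m' 1) = Finsupp.single (m * m') 1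
  const_mul : ∀ (a : 𝔽) (F : SkewPoly 𝔽 n), mul (C n a) F = a • F
  deg_mul : ∀ F G : SkewPoly 𝔽 n, F ≠ 0 → G ≠ 0 → deg (mul F G) = deg F + deg G

/-- The multiplication `S` satisfies the commutation rule
`xᵢ a = Σⱼ σ_{i,j}(a) xⱼ + δᵢ(a)`. -/
def HasCommRule (S : RawMul 𝔽 n) (σ : 𝔽 → Matrix (Fin n) (Fin n) 𝔽)
    (δ : 𝔽 → Fin n → 𝔽) : Prop :=
  ∀ (i : Fin n) (a : 𝔽),
    S.mul (X 𝔽 i) (C n a) =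
      (∑ j : Fin n, Finsupp.single (FreeMonoid.of j) (σ a i j)) + C n (δ a i)

/-- `F = Σᵢ Gᵢ (xᵢ - aᵢ) + b`, i.e. `b` is a remainder of `F` upon right division
by `x₁ - a₁, …, xₙ - aₙ`; equivalently `F - b` lies in the left ideal generated by
the `xᵢ - aᵢ`. -/
def Decomposes (S : RawMul 𝔽 n) (a : Fin n → 𝔽) (F : SkewPoly 𝔽 n) (b : 𝔽) : Prop :=
  ∃ G : Fin n → SkewPoly 𝔽 n,
    F = (∑ i : Fin n, S.mul (G i) (X 𝔽 i - C n (a i))) + C n b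

/-- The evaluation of `F` at the point `a`: the unique `b ∈ 𝔽` such that `F - b`
lies in the left ideal generated by `x₁ - a₁, …, xₙ - aₙ`. -/
noncomputable def eval (S : RawMul 𝔽 n) (a : Fin n → 𝔽) (F : SkewPoly 𝔽 n) : 𝔽 :=
  letI := Classical.propDecidable (∃ b : 𝔽, Decomposes S a F b)
  if h : ∃ b : 𝔽, Decomposes S a F b then h.choose else 0

/-- The `(σ,δ)`-conjugate `a^c = σ(c) a c⁻¹ + δ(c) c⁻¹` of `a` with respect to `c`. -/
noncomputable def conj (σ : 𝔽 → Matrix (Fin n) (Fin n) 𝔽) (δ : 𝔽 → Fin n → 𝔽)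
    (a : Fin n → 𝔽) (c : 𝔽) : Fin n → 𝔽 :=
  fun i => (σ c *ᵥ a) i * c⁻¹ + δ c i * c⁻¹

/-- `I(Ω)`: the set of skew polynomials vanishing at every point of `Ω`. -/
def zeroIdeal (S : RawMul 𝔽 n) (Ω : Set (Fin n → 𝔽)) : Set (SkewPoly 𝔽 n) :=
  {F | ∀ a ∈ Ω, eval S a F = 0}

/-- The left ideal of `SkewPoly 𝔽 n` generated by `x₁ - a₁, …, xₙ - aₙ`
(the set of sums of left multiples of the generators). -/
def pointIdeal (S : RawMul 𝔽 n) (a : Fin n → 𝔽) : Set (SkewPoly 𝔽 n) :=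
  {F | ∃ G : Fin n → SkewPoly 𝔽 n, F = ∑ i : Fin n, S.mul (G i) (X 𝔽 i - C n (a i))}

/-- The P-closure `Ω̄ = Z(I(Ω))` of a set of points `Ω`. -/
def pClosure (S : RawMul 𝔽 n) (Ω : Set (Fin n → 𝔽)) : Set (Fin n → 𝔽) :=
  {a | ∀ F ∈ zeroIdeal S Ω, eval S a F = 0}

/-- `Ω` is P-closed if it equals its P-closure. -/
def IsPClosed (S : RawMul 𝔽 n) (Ω : Set (Fin n → 𝔽)) : Prop := pClosure S Ω = Ω

/-- `B` is P-independent: no point of `B` lies in the P-closure of the rest. -/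
def PIndep (S : RawMul 𝔽 n) (B : Set (Fin n → 𝔽)) : Prop :=
  ∀ a ∈ B, a ∉ pClosure S (B \ {a})

/-- `B` is a P-basis of `Ω`: a P-independent subset of `Ω` whose P-closure is `Ω`. -/
def IsPBasis (S : RawMul 𝔽 n) (B Ω : Set (Fin n → 𝔽)) : Prop :=
  B ⊆ Ω ∧ PIndep S B ∧ pClosure S B = Ω

/-- `Ω` is finitely generated: it is the P-closure of a finite subset of itself. -/
def FinGen (S : RawMul 𝔽 n) (Ω : Set (Fin n → 𝔽)) : Prop :=
  ∃ G : Set (Fin n → 𝔽), G.Finite ∧ G ⊆ Ω ∧ pClosure S G = Ω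

/-- The rank of a P-closed set: the (common) cardinality of its P-bases. -/
noncomputable def pRank (S : RawMul 𝔽 n) (Ω : Set (Fin n → 𝔽)) : ℕ :=
  sInf {k : ℕ | ∃ B : Finset (Fin n → 𝔽), IsPBasis S ↑B Ω ∧ B.card = k}

/-- The image of the evaluation map `E_Ω : R → 𝔽^Ω`, as a left `𝔽`-subspace of `𝔽^Ω`
(the span of the image; the image is itself a subspace since evaluation is left linear). -/
noncomputable def evalSpan (S : RawMul 𝔽 n) (Ω : Set (Fin n → 𝔽)) :
    Submodule 𝔽 (↥Ω → 𝔽) :=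
  Submodule.span 𝔽 (Set.range fun F : SkewPoly 𝔽 n => fun a : ↥Ω => eval S ↑a F)

/-- `I` is a two-sided ideal with respect to the multiplication `S`. -/
def IsTwoSidedIdealSet (S : RawMul 𝔽 n) (I : Set (SkewPoly 𝔽 n)) : Prop :=
  (0 : SkewPoly 𝔽 n) ∈ I ∧ (∀ F ∈ I, ∀ G ∈ I, F + G ∈ I) ∧ (∀ F ∈ I, -F ∈ I) ∧
    (∀ F ∈ I, ∀ G : SkewPoly 𝔽 n, S.mul G F ∈ I) ∧
    (∀ F ∈ I, ∀ G : SkewPoly 𝔽 n, S.mul F G ∈ I)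


/-- The left row-rank of the skew Vandermonde matrix `V_d(G)`: the dimension of the
left `𝔽`-span of its rows `(N_m(c))_{c ∈ G}`, indexed by the words `m` of length `< d`,
where `N_m(c)` is the evaluation of the monomial `m` at the point `c`. -/
noncomputable def vandermondeRank (S : RawMul 𝔽 n) (G : Finset (Fin n → 𝔽)) (d : ℕ) :
    Cardinal :=
  Module.rank 𝔽 ↥(Submodule.span 𝔽 (Set.range
    fun m : {m : FreeMonoid (Fin n) // FreeMonoid.length m < d} =>
      fun c : ↥G => eval S ↑c (Finsupp.single (m : FreeMonoid (Fin n)) (1 : 𝔽))))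

end SkewPoly

open SkewPoly

/-!
Evaluation at `a` is computed by the left `𝔽`-linear functional sending a word `m` to its norm
`N_m(a)`, where each letter `xᵢ` acts on `𝔽 ≅ R / I(a)` by `b ↦ (σ(b)a)ᵢ + δᵢ(b)`, `I(a)` being
the left ideal generated by the `xⱼ - aⱼ`. This functional vanishes on `I(a)`, which makes
evaluation well defined. For the product rule let `c = G(a)`, so that `G - c ∈ I(a)` and
`F - F(a^c) ∈ I(a^c)`. The commutation rule gives `(xᵢ - (a^c)ᵢ) c = Σⱼ σᵢⱼ(c) (xⱼ - aⱼ)`,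
hence `I(a^c) c ⊆ I(a)`, and `FG - F(a^c) c = F (G - c) + (F - F(a^c)) c ∈ I(a)`.
-/

open Finset

namespace SkewPoly

variable {𝔽 : Type*} [DivisionRing 𝔽] {n : ℕ}

namespace RawMul

variable (S : RawMul 𝔽 n)

noncomputable def mulLeft (F : SkewPoly 𝔽 n) : SkewPoly 𝔽 n →+ SkewPoly 𝔽 n :=
  AddMonoidHom.mk' (S.mul F) (S.mul_add F)

noncomputable def mulRight (G : SkewPoly 𝔽 n) : SkewPoly 𝔽 n →+ SkewPoly 𝔽 n :=
  AddMonoidHom.mk' (S.mul · G) (S.add_mul · · G)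

theorem mul_zero (F : SkewPoly 𝔽 n) : S.mul F 0 = 0 :=
  (S.mulLeft F).map_zero

theorem zero_mul (G : SkewPoly 𝔽 n) : S.mul 0 G = 0 :=
  (S.mulRight G).map_zero

theorem mul_sub (F G H : SkewPoly 𝔽 n) : S.mul F (G - H) = S.mul F G - S.mul F H :=
  (S.mulLeft F).map_sub G H

theorem sub_mul (F G H : SkewPoly 𝔽 n) : S.mul (F - G) H = S.mul F H - S.mul G H :=
  (S.mulRight H).map_sub F G

theorem mul_sum {ι : Type*} (s : Finset ι) (F : SkewPoly 𝔽 n) (G : ι → SkewPoly 𝔽 n) :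
    S.mul F (∑ i ∈ s, G i) = ∑ i ∈ s, S.mul F (G i) :=
  map_sum (S.mulLeft F) G s

theorem sum_mul {ι : Type*} (s : Finset ι) (F : ι → SkewPoly 𝔽 n) (G : SkewPoly 𝔽 n) :
    S.mul (∑ i ∈ s, F i) G = ∑ i ∈ s, S.mul (F i) G :=
  map_sum (S.mulRight G) F s

theorem C_mul_C (b c : 𝔽) : S.mul (C n b) (C n c) = C n (b * c) := by
  rw [S.const_mul, C, C, Finsupp.smul_single, smul_eq_mul]

theorem C_mul_single_one (m : FreeMonoid (Fin n)) (c : 𝔽) :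
    S.mul (C n c) (Finsupp.single m 1) = Finsupp.single m c := by
  rw [S.const_mul, Finsupp.smul_single, smul_eq_mul, _root_.mul_one]

theorem single_mul_single_one (m m' : FreeMonoid (Fin n)) (c : 𝔽) :
    S.mul (Finsupp.single m c) (Finsupp.single m' 1) = Finsupp.single (m * m') c := by
  rw [← S.C_mul_single_one m c, ← S.C_mul_single_one (m * m') c, S.mul_assoc, S.mono_mul_mono]

end RawMul

theorem C_add (x y : 𝔽) : C n (x + y) = C n x + C n y :=
  Finsupp.single_add _ _ _

theorem C_sum {ι : Type*} (s : Finset ι) (f : ι → 𝔽) : C n (∑ i ∈ s, f i) = ∑ i ∈ s, C n (f i) :=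
  Finsupp.single_finsetSum _ _ _

variable {σ : 𝔽 → Matrix (Fin n) (Fin n) 𝔽} {δ : 𝔽 → Fin n → 𝔽} {S : RawMul 𝔽 n}
  {a : Fin n → 𝔽}

theorem IsMatrixMorphism.map_zero (hσ : IsMatrixMorphism σ) : σ 0 = 0 := by
  have h := hσ.2.1 0 0
  rw [add_zero] at h
  exact left_eq_add.mp h

theorem IsVectorDerivation.map_zero (hδ : IsVectorDerivation σ δ) : δ 0 = 0 := by
  have h := hδ.1 0 0
  rw [add_zero] at h
  exact left_eq_add.mp h

theorem IsVectorDerivation.map_one (hσ : IsMatrixMorphism σ) (hδ : IsVectorDerivation σ δ) :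
    δ 1 = 0 := by
  have h := hδ.2 1 1
  simp only [mul_one, hσ.1, one_mulVec] at h
  exact left_eq_add.mp h

section PointIdeal

theorem zero_mem_pointIdeal : (0 : SkewPoly 𝔽 n) ∈ pointIdeal S a :=
  ⟨0, by simp only [Pi.zero_apply, S.zero_mul, sum_const_zero]⟩

theorem add_mem_pointIdeal {H H' : SkewPoly 𝔽 n} (h : H ∈ pointIdeal S a)
    (h' : H' ∈ pointIdeal S a) : H + H' ∈ pointIdeal S a := by
  obtain ⟨G, rfl⟩ := h
  obtain ⟨G', rfl⟩ := h'
  exact ⟨G + G', by simp only [Pi.add_apply, S.add_mul, sum_add_distrib]⟩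

theorem sum_mem_pointIdeal {ι : Type*} {s : Finset ι} {H : ι → SkewPoly 𝔽 n}
    (h : ∀ i ∈ s, H i ∈ pointIdeal S a) : ∑ i ∈ s, H i ∈ pointIdeal S a :=
  sum_induction H _ (fun _ _ => add_mem_pointIdeal) zero_mem_pointIdeal h

theorem mul_mem_pointIdeal (F : SkewPoly 𝔽 n) {H : SkewPoly 𝔽 n} (h : H ∈ pointIdeal S a) :
    S.mul F H ∈ pointIdeal S a := by
  obtain ⟨G, rfl⟩ := h
  exact ⟨fun i => S.mul F (G i), by simp only [S.mul_sum, S.mul_assoc]⟩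

theorem decomposes_iff {F : SkewPoly 𝔽 n} {b : 𝔽} :
    Decomposes S a F b ↔ F - C n b ∈ pointIdeal S a :=
  exists_congr fun _ => sub_eq_iff_eq_add.symm

end PointIdeal

/-- The action of `xᵢ` on `𝔽 ≅ R / I(a)` forced by the commutation rule. -/
def varAct (σ : 𝔽 → Matrix (Fin n) (Fin n) 𝔽) (δ : 𝔽 → Fin n → 𝔽) (a : Fin n → 𝔽)
    (i : Fin n) (b : 𝔽) : 𝔽 :=
  (σ b *ᵥ a) i + δ b i

section VarAct

variable (hσ : IsMatrixMorphism σ) (hδ : IsVectorDerivation σ δ)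
include hσ hδ

theorem varAct_zero (i : Fin n) : varAct σ δ a i 0 = 0 := by
  simp only [varAct, hσ.map_zero, hδ.map_zero, zero_mulVec, Pi.zero_apply, add_zero]

theorem varAct_add (i : Fin n) (b b' : 𝔽) :
    varAct σ δ a i (b + b') = varAct σ δ a i b + varAct σ δ a i b' := by
  simp only [varAct, hσ.2.1, hδ.1, add_mulVec, Pi.add_apply]
  abel

theorem varAct_one (i : Fin n) : varAct σ δ a i 1 = a i := by
  simp only [varAct, hσ.1, hδ.map_one hσ, one_mulVec, Pi.zero_apply, add_zero]

theorem varAct_mul (i : Fin n) (c b : 𝔽) :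
    varAct σ δ a i (c * b) = ∑ j, σ c i j * varAct σ δ a j b + δ c i * b := by
  rw [varAct, hσ.2.2, hδ.2, ← mulVec_mulVec]
  simp only [varAct, Pi.add_apply, mulVec, dotProduct, mul_add, sum_add_distrib]
  abel

end VarAct

theorem conj_mul_self {c : 𝔽} (hc : c ≠ 0) (i : Fin n) :
    conj σ δ a c i * c = varAct σ δ a i c := by
  rw [conj, varAct, add_mul, inv_mul_cancel_right₀ hc, inv_mul_cancel_right₀ hc]

section CommRule

variable (hS : HasCommRule S σ δ)
include hS

theorem X_mul_C_sub_C_varAct_mem_pointIdeal (i : Fin n) (b : 𝔽) :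
    S.mul (X 𝔽 i) (C n b) - C n (varAct σ δ a i b) ∈ pointIdeal S a := by
  refine ⟨fun j => C n (σ b i j), ?_⟩
  have hgen (j : Fin n) : S.mul (C n (σ b i j)) (X 𝔽 j - C n (a j)) =
      Finsupp.single (FreeMonoid.of j) (σ b i j) - C n (σ b i j * a j) := by
    rw [S.mul_sub, S.C_mul_C, X, S.C_mul_single_one]
  rw [hS, sum_congr rfl fun j _ => hgen j, sum_sub_distrib]
  simp only [varAct, mulVec, dotProduct, C_add, C_sum]
  abel

theorem mul_C_mem_pointIdeal_of_mem_pointIdeal_conj (c : 𝔽) {H : SkewPoly 𝔽 n}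
    (h : H ∈ pointIdeal S (conj σ δ a c)) : S.mul H (C n c) ∈ pointIdeal S a := by
  rcases eq_or_ne c 0 with rfl | hc
  · rw [C, Finsupp.single_zero, S.mul_zero]
    exact zero_mem_pointIdeal
  obtain ⟨G, rfl⟩ := h
  rw [S.sum_mul]
  refine sum_mem_pointIdeal fun i _ => ?_
  rw [S.mul_assoc, S.sub_mul, S.C_mul_C, conj_mul_self hc]
  exact mul_mem_pointIdeal _ (X_mul_C_sub_C_varAct_mem_pointIdeal hS i c)

theorem exists_sub_C_mem_pointIdeal (F : SkewPoly 𝔽 n) :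
    ∃ b : 𝔽, F - C n b ∈ pointIdeal S a := by
  have hword (m : FreeMonoid (Fin n)) :
      ∃ b : 𝔽, Finsupp.single m 1 - C n b ∈ pointIdeal S a := by
    induction m using FreeMonoid.inductionOn' with
    | one => exact ⟨1, by rw [← C, sub_self]; exact zero_mem_pointIdeal⟩
    | of_mul i m ih =>
      obtain ⟨b, hb⟩ := ih
      refine ⟨varAct σ δ a i b, ?_⟩
      have hsplit : Finsupp.single (FreeMonoid.of i * m) 1 - C n (varAct σ δ a i b) =
          S.mul (X 𝔽 i) (Finsupp.single m 1 - C n b) +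
            (S.mul (X 𝔽 i) (C n b) - C n (varAct σ δ a i b)) := by
        rw [S.mul_sub, X, S.mono_mul_mono]
        abel
      rw [hsplit]
      exact add_mem_pointIdeal (mul_mem_pointIdeal _ hb)
        (X_mul_C_sub_C_varAct_mem_pointIdeal hS i b)
  induction F using Finsupp.induction_linear with
  | zero => exact ⟨0, by rw [C, Finsupp.single_zero, sub_zero]; exact zero_mem_pointIdeal⟩
  | add F F' hF hF' =>
    obtain ⟨b, hb⟩ := hF
    obtain ⟨b', hb'⟩ := hF'
    refine ⟨b + b', ?_⟩
    rw [C_add, add_sub_add_comm]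
    exact add_mem_pointIdeal hb hb'
  | single m c =>
    obtain ⟨b, hb⟩ := hword m
    refine ⟨c * b, ?_⟩
    rw [← S.C_mul_single_one, ← S.C_mul_C, ← S.mul_sub]
    exact mul_mem_pointIdeal _ hb

end CommRule

/-- The norm `N_m(a)` of the word `m` at `a`. -/
def wordNorm (σ : 𝔽 → Matrix (Fin n) (Fin n) 𝔽) (δ : 𝔽 → Fin n → 𝔽) (a : Fin n → 𝔽)
    (m : FreeMonoid (Fin n)) : 𝔽 :=
  m.toList.foldr (varAct σ δ a) 1

theorem wordNorm_one : wordNorm σ δ a 1 = 1 :=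
  rfl

theorem wordNorm_of_mul (i : Fin n) (m : FreeMonoid (Fin n)) :
    wordNorm σ δ a (FreeMonoid.of i * m) = varAct σ δ a i (wordNorm σ δ a m) :=
  rfl

noncomputable def evalLinear (σ : 𝔽 → Matrix (Fin n) (Fin n) 𝔽) (δ : 𝔽 → Fin n → 𝔽)
    (a : Fin n → 𝔽) : SkewPoly 𝔽 n →ₗ[𝔽] 𝔽 :=
  Finsupp.linearCombination 𝔽 (wordNorm σ δ a)

section Evaluation

theorem evalLinear_single (m : FreeMonoid (Fin n)) (c : 𝔽) :
    evalLinear σ δ a (Finsupp.single m c) = c * wordNorm σ δ a m := by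
  rw [evalLinear, Finsupp.linearCombination_single, smul_eq_mul]

theorem evalLinear_C (b : 𝔽) : evalLinear σ δ a (C n b) = b := by
  rw [C, evalLinear_single, wordNorm_one, mul_one]

theorem evalLinear_C_mul (c : 𝔽) (H : SkewPoly 𝔽 n) :
    evalLinear σ δ a (S.mul (C n c) H) = c * evalLinear σ δ a H := by
  rw [S.const_mul, map_smul, smul_eq_mul]

variable (hσ : IsMatrixMorphism σ) (hδ : IsVectorDerivation σ δ) (hS : HasCommRule S σ δ)
include hσ hδ hS

theorem evalLinear_X_mul (i : Fin n) (K : SkewPoly 𝔽 n) :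
    evalLinear σ δ a (S.mul (X 𝔽 i) K) = varAct σ δ a i (evalLinear σ δ a K) := by
  induction K using Finsupp.induction_linear with
  | zero => rw [S.mul_zero, map_zero, varAct_zero hσ hδ]
  | add K K' hK hK' => rw [S.mul_add, map_add, map_add, hK, hK', varAct_add hσ hδ]
  | single m c =>
    rw [← S.C_mul_single_one, ← S.mul_assoc, hS, evalLinear_C_mul, evalLinear_single, one_mul,
      S.add_mul, S.sum_mul, map_add, map_sum, C]
    simp only [S.single_mul_single_one, evalLinear_single, one_mul, wordNorm_of_mul]
    exact (varAct_mul hσ hδ i c _).symm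

theorem evalLinear_mul_X_sub_C (i : Fin n) (F : SkewPoly 𝔽 n) :
    evalLinear σ δ a (S.mul F (X 𝔽 i - C n (a i))) = 0 := by
  have hword (m : FreeMonoid (Fin n)) :
      evalLinear σ δ a (S.mul (Finsupp.single m 1) (X 𝔽 i - C n (a i))) = 0 := by
    induction m using FreeMonoid.inductionOn' with
    | one =>
      rw [← C, S.one_mul, map_sub, evalLinear_C, X, evalLinear_single, one_mul]
      exact sub_eq_zero.mpr (varAct_one hσ hδ i)
    | of_mul j m ih =>
      rw [← S.mono_mul_mono, ← X, S.mul_assoc, evalLinear_X_mul hσ hδ hS, ih,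
        varAct_zero hσ hδ]
  induction F using Finsupp.induction_linear with
  | zero => rw [S.zero_mul, map_zero]
  | add F F' hF hF' => rw [S.add_mul, map_add, hF, hF', add_zero]
  | single m c =>
    rw [← S.C_mul_single_one, S.mul_assoc, evalLinear_C_mul, hword, mul_zero]

theorem evalLinear_eq_zero_of_mem_pointIdeal {H : SkewPoly 𝔽 n} (h : H ∈ pointIdeal S a) :
    evalLinear σ δ a H = 0 := by
  obtain ⟨G, rfl⟩ := h
  rw [map_sum]
  exact sum_eq_zero fun i _ => evalLinear_mul_X_sub_C hσ hδ hS i (G i)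

theorem eval_eq_of_sub_C_mem_pointIdeal {F : SkewPoly 𝔽 n} {b : 𝔽}
    (h : F - C n b ∈ pointIdeal S a) : eval S a F = b := by
  have hev : ∀ b', F - C n b' ∈ pointIdeal S a → evalLinear σ δ a F = b' := fun b' h' => by
    rw [← sub_eq_zero, ← evalLinear_C (σ := σ) (δ := δ) (a := a) b', ← map_sub]
    exact evalLinear_eq_zero_of_mem_pointIdeal hσ hδ hS h'
  have hex : ∃ b', Decomposes S a F b' := ⟨b, decomposes_iff.mpr h⟩
  rw [eval, dif_pos hex, ← hev _ (decomposes_iff.mp hex.choose_spec), hev b h]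

theorem sub_C_eval_mem_pointIdeal (F : SkewPoly 𝔽 n) :
    F - C n (eval S a F) ∈ pointIdeal S a := by
  obtain ⟨b, hb⟩ := exists_sub_C_mem_pointIdeal hS F
  rwa [eval_eq_of_sub_C_mem_pointIdeal hσ hδ hS hb]

theorem eval_mul (F G : SkewPoly 𝔽 n) :
    eval S a (S.mul F G) = eval S (conj σ δ a (eval S a G)) F * eval S a G := by
  set c := eval S a G
  set b := eval S (conj σ δ a c) F
  have hsplit : S.mul F G - C n (b * c) =
      S.mul F (G - C n c) + S.mul (F - C n b) (C n c) := by
    rw [S.mul_sub, S.sub_mul, S.C_mul_C]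
    abel
  refine eval_eq_of_sub_C_mem_pointIdeal hσ hδ hS ?_
  rw [hsplit]
  exact add_mem_pointIdeal (mul_mem_pointIdeal F (sub_C_eval_mem_pointIdeal hσ hδ hS G))
    (mul_C_mem_pointIdeal_of_mem_pointIdeal_conj hS c (sub_C_eval_mem_pointIdeal hσ hδ hS F))

end Evaluation

end SkewPoly

theorem stmt4_general {𝔽 : Type*} [DivisionRing 𝔽] {n : ℕ}
    (σ : 𝔽 → Matrix (Fin n) (Fin n) 𝔽) (δ : 𝔽 → Fin n → 𝔽)
    (hσ : IsMatrixMorphism σ) (hδ : IsVectorDerivation σ δ)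
    (S : RawMul 𝔽 n) (hS : HasCommRule S σ δ)
    (F G : SkewPoly 𝔽 n) (a : Fin n → 𝔽) :
    (eval S a G = 0 → eval S a (S.mul F G) = 0) ∧
    (eval S a G ≠ 0 →
      eval S a (S.mul F G) = eval S (conj σ δ a (eval S a G)) F * eval S a G) := by
  refine ⟨fun hG => ?_, fun _ => eval_mul hσ hδ hS F G⟩
  rw [eval_mul hσ hδ hS F G, hG, mul_zero]

/-- Product rule: if `G(a) = 0` then `(FG)(a) = 0`; if
`c = G(a) ≠ 0` then `(FG)(a) = F(a^c) G(a)`. -/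
theorem stmt4 {𝔽 : Type*} [DivisionRing 𝔽] {n : ℕ} (hn : 0 < n)
    (σ : 𝔽 → Matrix (Fin n) (Fin n) 𝔽) (δ : 𝔽 → Fin n → 𝔽)
    (hσ : IsMatrixMorphism σ) (hδ : IsVectorDerivation σ δ)
    (S : RawMul 𝔽 n) (hS : HasCommRule S σ δ)
    (F G : SkewPoly 𝔽 n) (a : Fin n → 𝔽) :
    (eval S a G = 0 → eval S a (S.mul F G) = 0) ∧
    (eval S a G ≠ 0 →
      eval S a (S.mul F G) = eval S (conj σ δ a (eval S a G)) F * eval S a G) :=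
  stmt4_general σ δ hσ hδ S hS F G a
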